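/- Define f : (0,∞)² → ℝ by f(u,v) = 1 if u = v = 1 and f(u,v) = (u·v − 1)/(u + v − 2) otherwise. Then for all u, v ∈ (0,1] one has 0 < f(u,v) ≤ 1 and 1/f(u,v) ≤ f(1/u, 1/v) ≤ min(1/u, 1/v). -/

import Mathlib

/-- The conflict function `f`. -/
noncomputable def conflictF (u v : ℝ) : ℝ :=
  if u = 1 ∧ v = 1 then 1 else (u * v - 1) / (u + v - 2)

/-!
Off the point `u = v = 1` we have `f(u,v) = (1 - uv)/(2 - u - v)` and, clearing the denominators
`uv`, `f(1/u,1/v) = (1 - uv)/(u + v - 2uv)`. For `u, v ∈ (0,1]` all three quantities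
`1 - uv`, `2 - u - v`, `u + v - 2uv = u(1 - v) + v(1 - u)` are positive, and the inequalities
reduce to the polynomial identities
`(2 - u - v) - (1 - uv) = (1 - u)(1 - v)`,
`(1 - uv)² - (2 - u - v)(u + v - 2uv) = ((1 - u)(1 - v))²` and
`(u + v - 2uv) - u(1 - uv) = v(1 - u)²`.
-/

lemma conflictF_of_not_both_one {u v : ℝ} (h : ¬(u = 1 ∧ v = 1)) :
    conflictF u v = (1 - u * v) / (2 - u - v) := by
  rw [conflictF, if_neg h, ← neg_div_neg_eq]
  ring_nf

lemma conflictF_one_div_of_not_both_one {u v : ℝ} (hu : u ≠ 0) (hv : v ≠ 0)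
    (h : ¬(u = 1 ∧ v = 1)) :
    conflictF (1 / u) (1 / v) = (1 - u * v) / (u + v - 2 * u * v) := by
  have h' : ¬(1 / u = 1 ∧ 1 / v = 1) := by
    rwa [div_eq_one_iff_eq hu, div_eq_one_iff_eq hv, eq_comm, @eq_comm _ 1 v]
  rw [conflictF, if_neg h', ← mul_div_mul_left _ _ (mul_ne_zero hu hv)]
  congr 1
  · field_simp
  · field_simp
    ring

section

variable {u v : ℝ}

lemma one_sub_mul_pos (hu0 : 0 < u) (hu1 : u ≤ 1) (hv1 : v ≤ 1) (huv : u < 1 ∨ v < 1) :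
    0 < 1 - u * v := by
  rcases huv with h | h <;> nlinarith

lemma two_sub_sub_pos (hu1 : u ≤ 1) (hv1 : v ≤ 1) (huv : u < 1 ∨ v < 1) :
    0 < 2 - u - v := by
  rcases huv with h | h <;> linarith

lemma add_sub_two_mul_mul_pos (hu0 : 0 < u) (hu1 : u ≤ 1) (hv0 : 0 < v) (hv1 : v ≤ 1)
    (huv : u < 1 ∨ v < 1) : 0 < u + v - 2 * u * v := by
  rcases huv with h | h
  · nlinarith [mul_pos hv0 (sub_pos.mpr h), mul_nonneg hu0.le (sub_nonneg.mpr hv1)]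
  · nlinarith [mul_pos hu0 (sub_pos.mpr h), mul_nonneg hv0.le (sub_nonneg.mpr hu1)]

lemma one_sub_mul_le_two_sub_sub (hu1 : u ≤ 1) (hv1 : v ≤ 1) : 1 - u * v ≤ 2 - u - v := by
  linarith [mul_nonneg (sub_nonneg.mpr hu1) (sub_nonneg.mpr hv1)]

lemma two_sub_sub_mul_le_sq (u v : ℝ) : (2 - u - v) * (u + v - 2 * u * v) ≤ (1 - u * v) ^ 2 := by
  linarith [sq_nonneg ((1 - u) * (1 - v))]

lemma one_sub_mul_mul_le (hv0 : 0 ≤ v) : (1 - u * v) * u ≤ u + v - 2 * u * v := by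
  linarith [mul_nonneg hv0 (sq_nonneg (1 - u))]

end

theorem stmt12 (u v : ℝ) (hu0 : 0 < u) (hu1 : u ≤ 1) (hv0 : 0 < v) (hv1 : v ≤ 1) :
    0 < conflictF u v ∧ conflictF u v ≤ 1 ∧
    1 / conflictF u v ≤ conflictF (1 / u) (1 / v) ∧
    conflictF (1 / u) (1 / v) ≤ min (1 / u) (1 / v) := by
  by_cases h : u = 1 ∧ v = 1
  · obtain ⟨rfl, rfl⟩ := h
    norm_num [conflictF]
  have huv : u < 1 ∨ v < 1 := by
    by_contra! hge
    exact h ⟨le_antisymm hu1 hge.1, le_antisymm hv1 hge.2⟩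
  have hnum := one_sub_mul_pos hu0 hu1 hv1 huv
  have hden := two_sub_sub_pos hu1 hv1 huv
  have hden' := add_sub_two_mul_mul_pos hu0 hu1 hv0 hv1 huv
  rw [conflictF_of_not_both_one h, conflictF_one_div_of_not_both_one hu0.ne' hv0.ne' h]
  refine ⟨div_pos hnum hden, (div_le_one hden).2 (one_sub_mul_le_two_sub_sub hu1 hv1), ?_,
    le_min ?_ ?_⟩
  · rw [one_div_div, div_le_div_iff₀ hnum hden', ← sq]
    exact two_sub_sub_mul_le_sq u v
  · rw [div_le_div_iff₀ hden' hu0, one_mul]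
    exact one_sub_mul_mul_le hv0.le
  · rw [div_le_div_iff₀ hden' hv0, one_mul]
    linarith [one_sub_mul_mul_le (u := v) hu0.le]
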